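/- arXiv:2008.02730 — 4 statements merged into one kernel-verified Lean document; each statement's English description precedes it below -/
import Mathlib

section
/- For a bipartite pure state ρ = |ψ⟩⟨ψ| on H_j ⊗ H_k with dimensions d_j ≤ d_k, the Bloch vectors satisfy the exact relation ‖T^{(jk)}‖² = 4(d_j² − 1)/d_j² − (2(d_j + d_k)/(d_j d_k)) ‖T^{(j)}‖², where T^{(j)} is the Bloch vector of the reduced state ρ_j and T^{(jk)} is the correlation tensor with entries Tr(ρ λ_{i_j} ⊗ λ_{i_k}). -/
open Matrix BigOperators ComplexOrder Kronecker

/-!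
Expanding in the trace-orthogonal basis `{1, λᵢ}` of `d × d` matrices, and in its tensor square,
turns a purity `tr X²` into a sum of squared Bloch coordinates. For the pure state `ρ` this reads
`1 = 1/(d_j d_k) + ‖T^{(j)}‖²/(2 d_k) + ‖T^{(k)}‖²/(2 d_j) + ‖T^{(jk)}‖²/4`, and for its marginals
`tr ρ_j² = 1/d_j + ‖T^{(j)}‖²/2`, likewise for `k`. Reshaping `ψ` into a `d_j × d_k` matrix `M`,
`ρ_j = M Mᴴ` and `ρ_k = (Mᴴ M)ᵀ` have equal purity, and eliminating `‖T^{(k)}‖²` gives the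
identity. The Bloch coordinates are real because `ρ` and the `λᵢ` are Hermitian, so their squares
are their squared norms.
-/

namespace Matrix

section TraceOrthogonal

variable {K n m ι κ : Type*} [Fintype n] [Fintype m] [DecidableEq ι] [DecidableEq κ]

def IsTraceOrthogonal [Semiring K] (e : ι → Matrix n n K) (c : ι → K) : Prop :=
  ∀ i j, (e i * e j).trace = if i = j then c i else 0

theorem IsTraceOrthogonal.kronecker [CommSemiring K] {e : ι → Matrix n n K} {c : ι → K}
    {f : κ → Matrix m m K} {d : κ → K} (he : IsTraceOrthogonal e c)
    (hf : IsTraceOrthogonal f d) :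
    IsTraceOrthogonal (fun p : ι × κ => e p.1 ⊗ₖ f p.2) (fun p => c p.1 * d p.2) := by
  intro p q
  rw [← mul_kronecker_mul, trace_kronecker, he, hf]
  by_cases h₁ : p.1 = q.1 <;> by_cases h₂ : p.2 = q.2 <;> simp [h₁, h₂, Prod.ext_iff]

theorem IsTraceOrthogonal.sumElim_one [Semiring K] [DecidableEq n] {e : ι → Matrix n n K}
    {c : ι → K} (he : IsTraceOrthogonal e c) (htr : ∀ i, (e i).trace = 0) :
    IsTraceOrthogonal (Sum.elim e fun _ : Unit => 1)
      (Sum.elim c fun _ => (Fintype.card n : K)) := by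
  rintro (i | i) (j | j)
  · simpa using he i j
  all_goals simp [htr]

variable [Field K] [Fintype ι] {e : ι → Matrix n n K} {c : ι → K}

theorem IsTraceOrthogonal.trace_sum_smul_mul (he : IsTraceOrthogonal e c) (g : ι → K) (j : ι) :
    ((∑ i, g i • e i) * e j).trace = g j * c j := by
  simp [Finset.sum_mul, trace_sum, he _ j]

theorem IsTraceOrthogonal.linearIndependent (he : IsTraceOrthogonal e c) (hc : ∀ i, c i ≠ 0) :
    LinearIndependent K e := by
  refine Fintype.linearIndependent_iff.mpr fun g hg j => ?_
  have := he.trace_sum_smul_mul g j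
  rw [hg, zero_mul, trace_zero] at this
  exact (mul_eq_zero.mp this.symm).resolve_right (hc j)

theorem IsTraceOrthogonal.trace_mul_eq_sum [DecidableEq n] (he : IsTraceOrthogonal e c)
    (hc : ∀ i, c i ≠ 0) (hcard : Fintype.card ι = Fintype.card n * Fintype.card n)
    (X Y : Matrix n n K) :
    (X * Y).trace = ∑ i, (X * e i).trace * (Y * e i).trace / c i := by
  have hspan : X ∈ Submodule.span K (Set.range e) := by
    rw [(he.linearIndependent hc).span_eq_top_of_card_eq_finrank'
      (by simp [hcard, Module.finrank_matrix])]
    trivial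
  obtain ⟨g, rfl⟩ := (Submodule.mem_span_range_iff_exists_fun K).mp hspan
  calc ((∑ i, g i • e i) * Y).trace = ∑ i, g i * (Y * e i).trace := by
        simp only [Finset.sum_mul, trace_sum, smul_mul_assoc, trace_smul, smul_eq_mul,
          trace_mul_comm (e _) Y]
    _ = _ := by
        refine Finset.sum_congr rfl fun i _ => ?_
        rw [he.trace_sum_smul_mul, mul_right_comm, mul_div_cancel_right₀ _ (hc i)]

end TraceOrthogonal

section PartialTrace

variable {R n m : Type*}

def partialTraceRight [AddCommMonoid R] [Fintype m] (ρ : Matrix (n × m) (n × m) R) :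
    Matrix n n R :=
  of fun a b => ∑ c, ρ (a, c) (b, c)

def partialTraceLeft [AddCommMonoid R] [Fintype n] (ρ : Matrix (n × m) (n × m) R) :
    Matrix m m R :=
  of fun c d => ∑ a, ρ (a, c) (a, d)

variable [CommSemiring R]

theorem trace_mul_kronecker_one [Fintype n] [Fintype m] [DecidableEq m]
    (ρ : Matrix (n × m) (n × m) R) (A : Matrix n n R) :
    (ρ * (A ⊗ₖ 1)).trace = (partialTraceRight ρ * A).trace := by
  simp only [trace, diag_apply, mul_apply, kroneckerMap_apply, one_apply, mul_ite, mul_one,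
    mul_zero, Fintype.sum_prod_type, Finset.sum_ite_eq', Finset.mem_univ, ↓reduceIte,
    partialTraceRight, of_apply, Finset.sum_mul]
  exact Finset.sum_congr rfl fun _ _ => Finset.sum_comm

theorem trace_mul_one_kronecker [Fintype n] [Fintype m] [DecidableEq n]
    (ρ : Matrix (n × m) (n × m) R) (B : Matrix m m R) :
    (ρ * (1 ⊗ₖ B)).trace = (partialTraceLeft ρ * B).trace := by
  simp only [trace, diag_apply, mul_apply, kroneckerMap_apply, one_apply, ite_mul, one_mul,
    zero_mul, mul_ite, mul_zero, Fintype.sum_prod_type, Finset.sum_ite_irrel,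
    Finset.sum_const_zero, Finset.sum_ite_eq', Finset.mem_univ, ↓reduceIte, partialTraceLeft,
    of_apply, Finset.sum_mul]
  rw [Finset.sum_comm]
  exact Finset.sum_congr rfl fun _ _ => Finset.sum_comm

theorem trace_partialTraceRight [Fintype n] [Fintype m] (ρ : Matrix (n × m) (n × m) R) :
    (partialTraceRight ρ).trace = ρ.trace := by
  simp [trace, partialTraceRight, Fintype.sum_prod_type]

theorem trace_partialTraceLeft [Fintype n] [Fintype m] (ρ : Matrix (n × m) (n × m) R) :
    (partialTraceLeft ρ).trace = ρ.trace := by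
  simp only [trace, diag_apply, partialTraceLeft, of_apply, Fintype.sum_prod_type]
  exact Finset.sum_comm

theorem partialTraceRight_vecMulVec [Fintype m] (ψ φ : n × m → R) :
    partialTraceRight (vecMulVec ψ φ) = of (Function.curry ψ) * (of (Function.curry φ))ᵀ := by
  ext a b
  simp [partialTraceRight, mul_apply, vecMulVec_apply]

theorem partialTraceLeft_vecMulVec [Fintype n] (ψ φ : n × m → R) :
    partialTraceLeft (vecMulVec ψ φ) = (of (Function.curry ψ))ᵀ * of (Function.curry φ) := by
  ext c d
  simp [partialTraceLeft, mul_apply, vecMulVec_apply]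

theorem trace_mul_self_partialTraceRight_vecMulVec [Fintype n] [Fintype m] (ψ φ : n × m → R) :
    (partialTraceRight (vecMulVec ψ φ) * partialTraceRight (vecMulVec ψ φ)).trace
      = (partialTraceLeft (vecMulVec ψ φ) * partialTraceLeft (vecMulVec ψ φ)).trace := by
  rw [partialTraceRight_vecMulVec, partialTraceLeft_vecMulVec, ← trace_transpose]
  simp only [transpose_mul, transpose_transpose, Matrix.mul_assoc]
  rw [trace_mul_comm]
  simp only [Matrix.mul_assoc]

theorem trace_vecMulVec_mul_self [Fintype n] (u v : n → R) :
    (vecMulVec u v * vecMulVec u v).trace = (vecMulVec u v).trace ^ 2 := by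
  have htrace : ∀ w, (vecMulVec u w).trace = u ⬝ᵥ w := fun _ => rfl
  rw [vecMulVec_mul_vecMulVec, htrace, htrace, dotProduct_smul, smul_eq_mul, dotProduct_comm v,
    sq]

end PartialTrace

section GellMann

variable {K n m ι κ : Type*} [Field K] [Fintype n] [Fintype m] [Fintype ι] [DecidableEq ι]
  [Fintype κ] [DecidableEq κ]

/-- The defining properties of the generalized Gell-Mann matrices, Hermiticity aside. -/
structure IsGellMannFamily (lam : ι → Matrix n n K) : Prop where
  trace_eq_zero : ∀ i, (lam i).trace = 0
  isTraceOrthogonal : IsTraceOrthogonal lam fun _ => 2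
  card_add_one : Fintype.card ι + 1 = Fintype.card n * Fintype.card n

theorem isGellMannFamily_fin {d : ℕ} (hd : 0 < d)
    {lam : Fin (d ^ 2 - 1) → Matrix (Fin d) (Fin d) K} (htr : ∀ i, (lam i).trace = 0)
    (horth : ∀ i j, (lam i * lam j).trace = if i = j then 2 else 0) :
    IsGellMannFamily lam where
  trace_eq_zero := htr
  isTraceOrthogonal := horth
  card_add_one := by
    rw [Fintype.card_fin, Fintype.card_fin, Nat.sub_add_cancel (Nat.one_le_pow 2 d hd), sq]

namespace IsGellMannFamily

variable {lam : ι → Matrix n n K} {mu : κ → Matrix m m K}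

theorem card_sum_unit (h : IsGellMannFamily lam) :
    Fintype.card (ι ⊕ Unit) = Fintype.card n * Fintype.card n := by
  simpa using h.card_add_one

theorem isTraceOrthogonal_sumElim_one [DecidableEq n] (h : IsGellMannFamily lam) :
    IsTraceOrthogonal (Sum.elim lam fun _ : Unit => 1)
      (Sum.elim (fun _ => 2) fun _ => (Fintype.card n : K)) :=
  h.isTraceOrthogonal.sumElim_one h.trace_eq_zero

theorem card_ne_zero [CharZero K] (h : IsGellMannFamily lam) : (Fintype.card n : K) ≠ 0 :=
  Nat.cast_ne_zero.mpr fun h0 => by simpa [h0] using h.card_add_one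

theorem sumElim_ne_zero [CharZero K] (h : IsGellMannFamily lam) :
    ∀ i, Sum.elim (fun _ : ι => (2 : K)) (fun _ : Unit => (Fintype.card n : K)) i ≠ 0 := by
  rintro (i | i)
  exacts [two_ne_zero, h.card_ne_zero]

theorem trace_mul_self [CharZero K] [DecidableEq n] (h : IsGellMannFamily lam)
    (X : Matrix n n K) :
    (X * X).trace = X.trace ^ 2 / Fintype.card n + (∑ i, (X * lam i).trace ^ 2) / 2 := by
  rw [h.isTraceOrthogonal_sumElim_one.trace_mul_eq_sum h.sumElim_ne_zero h.card_sum_unit,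
    Fintype.sum_sum_type]
  simp only [Sum.elim_inl, Sum.elim_inr, mul_one, Finset.univ_unique, Finset.sum_singleton,
    ← sq, ← Finset.sum_div]
  ring

theorem trace_mul_self_kronecker [CharZero K] [DecidableEq n] [DecidableEq m]
    (hlam : IsGellMannFamily lam) (hmu : IsGellMannFamily mu) (X : Matrix (n × m) (n × m) K) :
    (X * X).trace = X.trace ^ 2 / (Fintype.card n * Fintype.card m)
      + (∑ i, (X * (lam i ⊗ₖ 1)).trace ^ 2) / (2 * Fintype.card m)
      + (∑ k, (X * (1 ⊗ₖ mu k)).trace ^ 2) / (2 * Fintype.card n)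
      + (∑ p : ι × κ, (X * (lam p.1 ⊗ₖ mu p.2)).trace ^ 2) / 4 := by
  rw [(hlam.isTraceOrthogonal_sumElim_one.kronecker
      hmu.isTraceOrthogonal_sumElim_one).trace_mul_eq_sum
    (fun p => mul_ne_zero (hlam.sumElim_ne_zero p.1) (hmu.sumElim_ne_zero p.2))
    (by simp only [Fintype.card_prod, hlam.card_sum_unit, hmu.card_sum_unit]; ring),
    Fintype.sum_prod_type, Fintype.sum_prod_type]
  simp only [Fintype.sum_sum_type, Sum.elim_inl, Sum.elim_inr, one_kronecker_one, mul_one,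
    Finset.univ_unique, Finset.sum_singleton, Finset.sum_add_distrib, ← sq, ← Finset.sum_div]
  ring

theorem sum_trace_mul_kronecker_sq_vecMulVec [CharZero K] [DecidableEq n] [DecidableEq m]
    (hlam : IsGellMannFamily lam) (hmu : IsGellMannFamily mu) {ψ φ : n × m → K}
    (htr : (vecMulVec ψ φ).trace = 1) :
    ∑ p : ι × κ, (vecMulVec ψ φ * (lam p.1 ⊗ₖ mu p.2)).trace ^ 2
      = 4 * ((Fintype.card n : K) ^ 2 - 1) / (Fintype.card n : K) ^ 2
        - 2 * ((Fintype.card n : K) + Fintype.card m) / (Fintype.card n * Fintype.card m)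
          * ∑ i, (partialTraceRight (vecMulVec ψ φ) * lam i).trace ^ 2 := by
  have hρ := hlam.trace_mul_self_kronecker hmu (vecMulVec ψ φ)
  have hρR := hlam.trace_mul_self (partialTraceRight (vecMulVec ψ φ))
  have hρL := hmu.trace_mul_self (partialTraceLeft (vecMulVec ψ φ))
  have hpur := trace_mul_self_partialTraceRight_vecMulVec ψ φ
  rw [trace_vecMulVec_mul_self] at hρ
  simp only [trace_mul_kronecker_one, trace_mul_one_kronecker, trace_partialTraceRight,
    trace_partialTraceLeft, htr, one_pow] at hρ hρR hρL
  set S := ∑ i, (partialTraceRight (vecMulVec ψ φ) * lam i).trace ^ 2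
  -- `hρL - hρR + hpur` expresses the Bloch norm of the second marginal through `S`
  have hT : ∑ p : ι × κ, (vecMulVec ψ φ * (lam p.1 ⊗ₖ mu p.2)).trace ^ 2
      = 4 - 4 / (Fintype.card n : K) ^ 2 - 2 * S / Fintype.card m - 2 * S / Fintype.card n := by
    linear_combination (-4 : K) * hρ + (4 / (Fintype.card n : K)) * (hρL - hρR + hpur)
  have hn := hlam.card_ne_zero
  have hm := hmu.card_ne_zero
  rw [hT]
  field_simp
  ring

end IsGellMannFamily

end GellMann

theorem IsHermitian.kronecker {α n m : Type*} [CommSemiring α] [StarRing α]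
    {A : Matrix n n α} {B : Matrix m m α} (hA : A.IsHermitian) (hB : B.IsHermitian) :
    (A ⊗ₖ B).IsHermitian := by
  rw [IsHermitian, conjTranspose_kronecker, hA.eq, hB.eq]

section RCLike

variable {𝕜 n : Type*} [RCLike 𝕜] [Fintype n]

theorem trace_vecMulVec_star (ψ : n → 𝕜) :
    (vecMulVec ψ (star ψ)).trace = ((∑ i, ‖ψ i‖ ^ 2 : ℝ) : 𝕜) := by
  simp [trace, vecMulVec_apply, RCLike.mul_conj]

theorem IsHermitian.norm_trace_mul_sq {A B : Matrix n n 𝕜} (hA : A.IsHermitian)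
    (hB : B.IsHermitian) : (‖(A * B).trace‖ : 𝕜) ^ 2 = (A * B).trace ^ 2 := by
  have hreal : star (A * B).trace = (A * B).trace := by
    rw [← trace_conjTranspose, conjTranspose_mul, hA.eq, hB.eq, trace_mul_comm]
  rw [← RCLike.conj_eq_iff_re.mp hreal, RCLike.norm_ofReal]
  norm_cast
  exact sq_abs _

end RCLike

end Matrix

theorem pure_bipartite_correlation_identity_general (dj dk : ℕ)
    (ρ : Matrix (Fin dj × Fin dk) (Fin dj × Fin dk) ℂ)
    (hpure : ∃ ψ : Fin dj × Fin dk → ℂ, (∑ x, ‖ψ x‖ ^ 2 = 1) ∧ ρ = vecMulVec ψ (star ψ))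
    (lamJ : Fin (dj ^ 2 - 1) → Matrix (Fin dj) (Fin dj) ℂ)
    (lamK : Fin (dk ^ 2 - 1) → Matrix (Fin dk) (Fin dk) ℂ)
    (hhermJ : ∀ i, (lamJ i).IsHermitian) (hhermK : ∀ i, (lamK i).IsHermitian)
    (htr0J : ∀ i, (lamJ i).trace = 0) (htr0K : ∀ i, (lamK i).trace = 0)
    (horthJ : ∀ i j, (lamJ i * lamJ j).trace = if i = j then 2 else 0)
    (horthK : ∀ i j, (lamK i * lamK j).trace = if i = j then 2 else 0)
    -- the reduced density matrix of the first subsystem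
    (ρj : Matrix (Fin dj) (Fin dj) ℂ)
    (hρj : ∀ a b, ρj a b = ∑ c : Fin dk, ρ (a, c) (b, c)) :
    ∑ i : Fin (dj ^ 2 - 1) × Fin (dk ^ 2 - 1), ‖(ρ * (lamJ i.1 ⊗ₖ lamK i.2)).trace‖ ^ 2
      = 4 * ((dj : ℝ) ^ 2 - 1) / (dj : ℝ) ^ 2
        - (2 * ((dj : ℝ) + (dk : ℝ)) / ((dj : ℝ) * (dk : ℝ)))
          * ∑ i, ‖(ρj * lamJ i).trace‖ ^ 2 := by
  obtain ⟨ψ, hψ, rfl⟩ := hpure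
  obtain rfl : ρj = partialTraceRight (vecMulVec ψ (star ψ)) := Matrix.ext hρj
  obtain ⟨x, -, -⟩ := Finset.exists_ne_zero_of_sum_ne_zero (hψ.trans_ne one_ne_zero)
  have hnorm : ∀ {A : Matrix (Fin dj × Fin dk) (Fin dj × Fin dk) ℂ}, A.IsHermitian →
      (‖(vecMulVec ψ (star ψ) * A).trace‖ : ℂ) ^ 2 = (vecMulVec ψ (star ψ) * A).trace ^ 2 :=
    (posSemidef_vecMulVec_self_star ψ).isHermitian.norm_trace_mul_sq
  have hcorr := (isGellMannFamily_fin x.1.pos htr0J horthJ).sum_trace_mul_kronecker_sq_vecMulVec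
      (isGellMannFamily_fin x.2.pos htr0K horthK)
    (by rw [trace_vecMulVec_star, hψ, RCLike.ofReal_one])
  simp only [Fintype.card_fin, ← trace_mul_kronecker_one] at hcorr
  apply Complex.ofReal_injective
  simp only [← trace_mul_kronecker_one]
  push_cast
  rw [Finset.sum_congr rfl fun p _ => hnorm ((hhermJ p.1).kronecker (hhermK p.2)),
    Finset.sum_congr rfl fun i _ => hnorm ((hhermJ i).kronecker isHermitian_one)]
  exact hcorr

/-- For a bipartite pure state ρ = |ψ⟩⟨ψ| on H_j ⊗ H_k with d_j ≤ d_k one has the exact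
relation ‖T^{(jk)}‖² = 4(d_j²−1)/d_j² − (2(d_j+d_k)/(d_j d_k)) ‖T^{(j)}‖², where T^{(j)} is
the Bloch vector of the reduced state ρ_j. -/
theorem pure_bipartite_correlation_identity (dj dk : ℕ) (hdj : 2 ≤ dj) (hjk : dj ≤ dk)
    (ρ : Matrix (Fin dj × Fin dk) (Fin dj × Fin dk) ℂ)
    (hpure : ∃ ψ : Fin dj × Fin dk → ℂ, (∑ x, ‖ψ x‖ ^ 2 = 1) ∧ ρ = vecMulVec ψ (star ψ))
    (lamJ : Fin (dj ^ 2 - 1) → Matrix (Fin dj) (Fin dj) ℂ)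
    (lamK : Fin (dk ^ 2 - 1) → Matrix (Fin dk) (Fin dk) ℂ)
    (hhermJ : ∀ i, (lamJ i).IsHermitian) (hhermK : ∀ i, (lamK i).IsHermitian)
    (htr0J : ∀ i, (lamJ i).trace = 0) (htr0K : ∀ i, (lamK i).trace = 0)
    (horthJ : ∀ i j, (lamJ i * lamJ j).trace = if i = j then 2 else 0)
    (horthK : ∀ i j, (lamK i * lamK j).trace = if i = j then 2 else 0)
    -- the reduced density matrix of the first subsystem
    (ρj : Matrix (Fin dj) (Fin dj) ℂ)
    (hρj : ∀ a b, ρj a b = ∑ c : Fin dk, ρ (a, c) (b, c)) :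
    ∑ i : Fin (dj ^ 2 - 1) × Fin (dk ^ 2 - 1), ‖(ρ * (lamJ i.1 ⊗ₖ lamK i.2)).trace‖ ^ 2
      = 4 * ((dj : ℝ) ^ 2 - 1) / (dj : ℝ) ^ 2
        - (2 * ((dj : ℝ) + (dk : ℝ)) / ((dj : ℝ) * (dk : ℝ)))
          * ∑ i, ‖(ρj * lamJ i).trace‖ ^ 2 :=
  pure_bipartite_correlation_identity_general dj dk ρ hpure lamJ lamK hhermJ hhermK htr0J htr0K
    horthJ horthK ρj hρj
end

section
/- Let n ≥ 3 and let 2 ≤ d_1 ≤ d_2 ≤ ⋯ ≤ d_n be integers with d_n ≤ d_1⋯d_{n−1}. Then ∑_{i=1}^{n} 1/d_i² − 2/(d_1⋯d_n) ≥ (∑_{1≤i_1<⋯<i_{n−1}≤n} d_{i_1}⋯d_{i_{n−1}} − ∑_{i=1}^{n} d_i + (n−2)d_n)/(d_1⋯d_{n−1} d_n²). -/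
/-!
Multiplying by `d_1⋯d_n · d_n`, the difference of the two sides becomes
`∑ᵢ (d_n − d_i)(d_1⋯d_n / d_i² − 1)`, and every summand is nonnegative because `d_i ≤ d_n` and
`d_i² ≤ d_i · d_n ≤ d_1⋯d_{n−1} · d_n`.
-/

open Finset

section

variable {ι : Type*} [Fintype ι] [DecidableEq ι] {x : ι → ℝ}

lemma prod_erase_eq_prod_div (hx : ∀ i, x i ≠ 0) (i : ι) :
    ∏ j ∈ univ.erase i, x j = (∏ j, x j) / x i :=
  eq_div_of_mul_eq (hx i) (prod_erase_mul _ _ (mem_univ i))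

lemma sum_inv_sq_sub_two_div_prod_mul_sub_eq (hx : ∀ i, x i ≠ 0) (D : ℝ) :
    (∑ i, 1 / x i ^ 2 - 2 / ∏ i, x i) * ((∏ i, x i) * D)
        - (∑ i, ∏ j ∈ univ.erase i, x j - ∑ i, x i + ((Fintype.card ι : ℝ) - 2) * D)
      = ∑ i, (D - x i) * ((∏ j, x j) / x i ^ 2 - 1) := by
  have hQ : ∏ i, x i ≠ 0 := prod_ne_zero_iff.2 fun i _ => hx i
  have hterm : ∀ i, (D - x i) * ((∏ j, x j) / x i ^ 2 - 1)
      = 1 / x i ^ 2 * ((∏ j, x j) * D) - (∏ j, x j) / x i - D + x i := by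
    intro i
    field_simp [hx i]
    ring
  simp only [hterm, prod_erase_eq_prod_div hx, sum_add_distrib, sum_sub_distrib, sum_const,
    card_univ, nsmul_eq_mul, ← sum_mul]
  field_simp
  ring

theorem le_sum_inv_sq_sub_two_div_prod {D : ℝ} (hx : ∀ i, 0 < x i) (hD₀ : 0 < D)
    (hD : ∀ i, x i ≤ D) (hsq : ∀ i, x i ^ 2 ≤ ∏ j, x j) :
    (∑ i, ∏ j ∈ univ.erase i, x j - ∑ i, x i + ((Fintype.card ι : ℝ) - 2) * D)
        / ((∏ i, x i) * D)
      ≤ ∑ i, 1 / x i ^ 2 - 2 / ∏ i, x i := by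
  have hQD : 0 < (∏ i, x i) * D := mul_pos (prod_pos fun i _ => hx i) hD₀
  have hsum : 0 ≤ ∑ i, (D - x i) * ((∏ j, x j) / x i ^ 2 - 1) :=
    sum_nonneg fun i _ => mul_nonneg (sub_nonneg.2 (hD i))
      (sub_nonneg.2 ((one_le_div (pow_pos (hx i) 2)).2 (hsq i)))
  rw [div_le_iff₀ hQD, ← sub_nonneg, sum_inv_sq_sub_two_div_prod_mul_sub_eq fun i => (hx i).ne']
  exact hsum

end

theorem dimension_inequality_general (n : ℕ) (d : Fin (n + 1) → ℝ)
    (hd2 : ∀ i, 2 ≤ d i) (hmono : Monotone d)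
    (hlast : d (Fin.last n) ≤ ∏ i : Fin n, d i.castSucc) :
    (∑ i, 1 / d i ^ 2) - 2 / ∏ i, d i ≥
      ((∑ i : Fin (n + 1), ∏ j ∈ Finset.univ.erase i, d j)
          - (∑ i, d i) + ((n : ℝ) - 1) * d (Fin.last n))
        / ((∏ i : Fin n, d i.castSucc) * d (Fin.last n) ^ 2) := by
  have hpos : ∀ i, 0 < d i := fun i => two_pos.trans_le (hd2 i)
  have hle : ∀ i, d i ≤ d (Fin.last n) := fun i => hmono (Fin.le_last i)
  have hprod : ∏ i, d i = (∏ i : Fin n, d i.castSucc) * d (Fin.last n) :=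
    Fin.prod_univ_castSucc d
  have hsq : ∀ i, d i ^ 2 ≤ ∏ j, d j := fun i => by
    rw [hprod, sq]
    exact mul_le_mul ((hle i).trans hlast) (hle i) (hpos i).le
      (prod_pos fun j _ => hpos _).le
  have key := le_sum_inv_sq_sub_two_div_prod hpos (hpos _) hle hsq
  rw [hprod, Fintype.card_fin, mul_assoc, ← sq] at key
  push_cast at key
  convert key using 3
  ring

/-- For n+1 ≥ 3 dimensions 2 ≤ d_1 ≤ ⋯ ≤ d_{n+1} with d_{n+1} ≤ d_1⋯d_n one has
∑ 1/d_i² − 2/∏ d_i ≥ (∑ products of all but one d − ∑ d_i + ((n+1)−2) d_{max})/(d_1⋯d_n d_{max}²). -/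
theorem dimension_inequality (n : ℕ) (hn : 2 ≤ n) (d : Fin (n + 1) → ℝ)
    (hd2 : ∀ i, 2 ≤ d i) (hmono : Monotone d)
    (hlast : d (Fin.last n) ≤ ∏ i : Fin n, d i.castSucc) :
    (∑ i, 1 / d i ^ 2) - 2 / ∏ i, d i ≥
      ((∑ i : Fin (n + 1), ∏ j ∈ Finset.univ.erase i, d j)
          - (∑ i, d i) + ((n : ℝ) - 1) * d (Fin.last n))
        / ((∏ i : Fin n, d i.castSucc) * d (Fin.last n) ^ 2) :=
  dimension_inequality_general n d hd2 hmono hlast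
end

section
/- Let ρ be a fully separable ((1,1,…,1)-separable) state on H_1^{d_1} ⊗ ⋯ ⊗ H_n^{d_n} with d_i ≥ 2. Then ‖T^{(12⋯n)}‖² ≤ 2^n ∏_{i=1}^n (d_i − 1)/d_i. -/
open Matrix BigOperators

/-- The Kronecker (tensor) product of a finite family of square matrices, given entrywise. -/
def famKron {ι : Type*} [Fintype ι] {dims : ι → ℕ}
    (M : ∀ k, Matrix (Fin (dims k)) (Fin (dims k)) ℂ) :
    Matrix (∀ k, Fin (dims k)) (∀ k, Fin (dims k)) ℂ :=
  fun a b => ∏ k, M k (a k) (b k)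

/-
For a single party, the identity scaled by 1/√d together with the generators scaled by 1/√2 is
an orthonormal family in Hilbert–Schmidt space. Bessel's inequality applied to a pure state P,
which has tr P = 1 and Hilbert–Schmidt norm 1, gives Σⱼ |tr(P λⱼ)|² ≤ 2(1 − 1/d). For a product of
pure states the trace against a Kronecker product of generators factorizes, so the squared
correlation tensor of the product state is the product of the local squared Bloch norms. A
separable state is a convex combination of such states, and the squared norm is convex.
-/

open scoped InnerProductSpace ComplexConjugate

section Kronecker

variable {ι : Type*} [Fintype ι] {dims : ι → ℕ}

theorem famKron_mul_famKron [DecidableEq ι] (A B : ∀ k, Matrix (Fin (dims k)) (Fin (dims k)) ℂ) :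
    famKron A * famKron B = famKron fun k => A k * B k := by
  ext a c
  simp only [famKron, mul_apply, ← Finset.prod_mul_distrib]
  exact (Fintype.prod_sum fun k b => A k (a k) b * B k b (c k)).symm

theorem trace_famKron [DecidableEq ι] (A : ∀ k, Matrix (Fin (dims k)) (Fin (dims k)) ℂ) :
    (famKron A).trace = ∏ k, (A k).trace := by
  simp only [trace, diag, famKron]
  exact (Fintype.prod_sum fun k a => A k a a).symm

theorem vecMulVec_prod_eq_famKron (φ : ∀ k, Fin (dims k) → ℂ) :
    vecMulVec (fun x => ∏ k, φ k (x k)) (star fun x => ∏ k, φ k (x k))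
      = famKron fun k => vecMulVec (φ k) (star (φ k)) := by
  ext a b
  simp only [vecMulVec_apply, famKron, Pi.star_apply, star_prod, Finset.prod_mul_distrib]

end Kronecker

section HilbertSchmidt

variable {ι κ : Type*} [Fintype ι]

noncomputable def hilbertSchmidtVec (A : Matrix ι ι ℂ) : EuclideanSpace ℂ (ι × ι) :=
  WithLp.toLp 2 (Function.uncurry A)

theorem inner_hilbertSchmidtVec (A B : Matrix ι ι ℂ) :
    ⟪hilbertSchmidtVec A, hilbertSchmidtVec B⟫_ℂ = (Aᴴ * B).trace := by
  simp only [hilbertSchmidtVec, PiLp.inner_apply, RCLike.inner_apply, trace, diag, mul_apply,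
    conjTranspose_apply, Fintype.sum_prod_type, RCLike.star_def]
  rw [Finset.sum_comm]
  exact Finset.sum_congr rfl fun _ _ => Finset.sum_congr rfl fun _ _ => mul_comm _ _

theorem norm_hilbertSchmidtVec_sq (A : Matrix ι ι ℂ) :
    ‖hilbertSchmidtVec A‖ ^ 2 = ∑ a, ∑ b, ‖A a b‖ ^ 2 := by
  rw [EuclideanSpace.norm_eq, Real.sq_sqrt (by positivity), Fintype.sum_prod_type]
  rfl

variable [DecidableEq ι]

noncomputable def hilbertSchmidtFrame (lam : κ → Matrix ι ι ℂ) :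
    Option κ → EuclideanSpace ℂ (ι × ι)
  | none => ((√(Fintype.card ι) : ℝ) : ℂ)⁻¹ • hilbertSchmidtVec 1
  | some j => ((√2 : ℝ) : ℂ)⁻¹ • hilbertSchmidtVec (lam j)

theorem orthonormal_hilbertSchmidtFrame [Nonempty ι] [DecidableEq κ]
    {lam : κ → Matrix ι ι ℂ} (hherm : ∀ j, (lam j).IsHermitian) (htr0 : ∀ j, (lam j).trace = 0)
    (horth : ∀ i j, (lam i * lam j).trace = if i = j then 2 else 0) :
    Orthonormal ℂ (hilbertSchmidtFrame lam) := by
  have hcard : (0 : ℝ) < Fintype.card ι := Nat.cast_pos.mpr Fintype.card_pos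
  rw [orthonormal_iff_ite]
  rintro (_ | i) (_ | j) <;>
    simp only [hilbertSchmidtFrame, inner_smul_left, inner_smul_right, inner_hilbertSchmidtVec,
      conjTranspose_one, Matrix.one_mul, Matrix.mul_one, trace_one, map_inv₀, Complex.conj_ofReal,
      (hherm _).eq, htr0, mul_zero, reduceCtorEq, if_false, Option.some.injEq]
  · rw [← mul_assoc, ← mul_inv, ← Complex.ofReal_mul, Real.mul_self_sqrt hcard.le,
      Complex.ofReal_natCast, if_pos trivial]
    exact inv_mul_cancel₀ (by exact_mod_cast hcard.ne')
  · rw [horth, ← mul_assoc, ← mul_inv, ← Complex.ofReal_mul, Real.mul_self_sqrt zero_le_two]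
    split_ifs <;> simp

theorem norm_trace_sq_div_card_add_le [Nonempty ι] [Fintype κ] [DecidableEq κ]
    {lam : κ → Matrix ι ι ℂ}
    (hherm : ∀ j, (lam j).IsHermitian) (htr0 : ∀ j, (lam j).trace = 0)
    (horth : ∀ i j, (lam i * lam j).trace = if i = j then 2 else 0) (A : Matrix ι ι ℂ) :
    ‖A.trace‖ ^ 2 / Fintype.card ι + (∑ j, ‖(A * lam j).trace‖ ^ 2) / 2
      ≤ ∑ a, ∑ b, ‖A a b‖ ^ 2 := by
  have hbessel := (orthonormal_hilbertSchmidtFrame hherm htr0 horth).sum_inner_products_le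
    (s := Finset.univ) (hilbertSchmidtVec A)
  have hnorm_scaled (r : ℝ) (hr : 0 ≤ r) (z : ℂ) : ‖(conj (√r : ℂ))⁻¹ * z‖ ^ 2 = ‖z‖ ^ 2 / r := by
    rw [Complex.conj_ofReal, norm_mul, norm_inv, Complex.norm_real,
      Real.norm_of_nonneg (Real.sqrt_nonneg r), mul_pow, inv_pow, Real.sq_sqrt hr, inv_mul_eq_div]
  simp only [Fintype.sum_option, hilbertSchmidtFrame, inner_smul_left, inner_hilbertSchmidtVec,
    map_inv₀, conjTranspose_one, Matrix.one_mul, (hherm _).eq, trace_mul_comm (lam _) A,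
    hnorm_scaled _ (Nat.cast_nonneg _), hnorm_scaled 2 zero_le_two, norm_hilbertSchmidtVec_sq]
    at hbessel
  rwa [Finset.sum_div]

theorem sum_norm_trace_vecMulVec_mul_sq_le [Fintype κ] [DecidableEq κ] {lam : κ → Matrix ι ι ℂ}
    (hherm : ∀ j, (lam j).IsHermitian) (htr0 : ∀ j, (lam j).trace = 0)
    (horth : ∀ i j, (lam i * lam j).trace = if i = j then 2 else 0)
    {φ : ι → ℂ} (hφ : ∑ a, ‖φ a‖ ^ 2 = 1) :
    ∑ j, ‖(vecMulVec φ (star φ) * lam j).trace‖ ^ 2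
      ≤ 2 * (((Fintype.card ι : ℝ) - 1) / Fintype.card ι) := by
  have : Nonempty ι := by
    by_contra hempty
    simp [not_nonempty_iff.mp hempty] at hφ
  have htrace : (vecMulVec φ (star φ)).trace = 1 := by
    simp only [trace_vecMulVec, dotProduct, Pi.star_apply, RCLike.star_def, Complex.mul_conj']
    exact_mod_cast congrArg Complex.ofReal hφ
  have hnorm : ∑ a, ∑ b, ‖vecMulVec φ (star φ) a b‖ ^ 2 = 1 := by
    simp only [vecMulVec_apply, Pi.star_apply, norm_mul, norm_star, mul_pow, ← Finset.mul_sum, hφ,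
      mul_one]
  have hbessel := norm_trace_sq_div_card_add_le hherm htr0 horth (vecMulVec φ (star φ))
  rw [htrace, hnorm, norm_one, one_pow] at hbessel
  have hcard : (0 : ℝ) < Fintype.card ι := Nat.cast_pos.mpr Fintype.card_pos
  rw [sub_div, div_self hcard.ne']
  linarith

end HilbertSchmidt

theorem fully_separable_correlation_bound_general (n : ℕ) (dims : Fin n → ℕ)
    (ρ : Matrix (∀ k, Fin (dims k)) (∀ k, Fin (dims k)) ℂ)
    (hsep : ∃ (N : ℕ) (p : Fin N → ℝ) (φ : Fin N → ∀ i, Fin (dims i) → ℂ),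
        (∀ k, 0 < p k) ∧ (∑ k, p k = 1) ∧
        (∀ k i, ∑ y, ‖φ k i y‖ ^ 2 = 1) ∧
        ρ = ∑ k, (p k : ℂ) •
          vecMulVec (fun x => ∏ i, φ k i (x i)) (star fun x => ∏ i, φ k i (x i)))
    (lam : ∀ k, Fin (dims k ^ 2 - 1) → Matrix (Fin (dims k)) (Fin (dims k)) ℂ)
    (hherm : ∀ k i, (lam k i).IsHermitian)
    (htr0 : ∀ k i, (lam k i).trace = 0)
    (horth : ∀ k i j, (lam k i * lam k j).trace = if i = j then 2 else 0) :
    ∑ i : ∀ k, Fin (dims k ^ 2 - 1),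
        ‖(ρ * famKron fun k => lam k (i k)).trace‖ ^ 2
      ≤ 2 ^ n * ∏ i, ((dims i : ℝ) - 1) / (dims i : ℝ) := by
  obtain ⟨N, p, φ, hp, hp1, hφ, hρ⟩ := hsep
  set t : Fin N → ∀ k, Fin (dims k ^ 2 - 1) → ℂ :=
    fun m k j => (vecMulVec (φ m k) (star (φ m k)) * lam k j).trace
  have htrace (i : ∀ k, Fin (dims k ^ 2 - 1)) :
      (ρ * famKron fun k => lam k (i k)).trace = ∑ m, p m • ∏ k, t m k (i k) := by
    simp only [hρ, Matrix.sum_mul, trace_sum, Matrix.smul_mul, trace_smul, Complex.coe_smul,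
      vecMulVec_prod_eq_famKron, famKron_mul_famKron, trace_famKron, t]
  have hjensen (z : Fin N → ℂ) : ‖∑ m, p m • z m‖ ^ 2 ≤ ∑ m, p m * ‖z m‖ ^ 2 :=
    (convexOn_univ_norm.pow (fun _ _ => norm_nonneg _) 2).map_sum_le
      (fun m _ => (hp m).le) hp1 (fun _ _ => Set.mem_univ _)
  calc ∑ i : ∀ k, Fin (dims k ^ 2 - 1), ‖(ρ * famKron fun k => lam k (i k)).trace‖ ^ 2
      ≤ ∑ i : ∀ k, Fin (dims k ^ 2 - 1), ∑ m, p m * ‖∏ k, t m k (i k)‖ ^ 2 := by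
        gcongr with i
        rw [htrace]
        exact hjensen _
    _ = ∑ m, p m * ∏ k, ∑ j, ‖t m k j‖ ^ 2 := by
        rw [Finset.sum_comm]
        simp only [Fintype.prod_sum, Finset.mul_sum, norm_prod, Finset.prod_pow]
    _ ≤ ∑ m, p m * ∏ k, 2 * (((dims k : ℝ) - 1) / dims k) := by
        gcongr with m _ k
        · exact (hp m).le
        · simpa using sum_norm_trace_vecMulVec_mul_sq_le (hherm k) (htr0 k) (horth k) (hφ m k)
    _ = 2 ^ n * ∏ k, ((dims k : ℝ) - 1) / dims k := by
        rw [← Finset.sum_mul, hp1, one_mul, Finset.prod_mul_distrib, Finset.prod_const,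
          Finset.card_univ, Fintype.card_fin]

/-- For a fully separable ((1,…,1)-separable) n-partite state,
‖T^{(12⋯n)}‖² ≤ 2ⁿ ∏_i (d_i − 1)/d_i. -/
theorem fully_separable_correlation_bound (n : ℕ) (dims : Fin n → ℕ)
    (hd2 : ∀ i, 2 ≤ dims i)
    (ρ : Matrix (∀ k, Fin (dims k)) (∀ k, Fin (dims k)) ℂ)
    (hsep : ∃ (N : ℕ) (p : Fin N → ℝ) (φ : Fin N → ∀ i, Fin (dims i) → ℂ),
        (∀ k, 0 < p k) ∧ (∑ k, p k = 1) ∧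
        (∀ k i, ∑ y, ‖φ k i y‖ ^ 2 = 1) ∧
        ρ = ∑ k, (p k : ℂ) •
          vecMulVec (fun x => ∏ i, φ k i (x i)) (star fun x => ∏ i, φ k i (x i)))
    (lam : ∀ k, Fin (dims k ^ 2 - 1) → Matrix (Fin (dims k)) (Fin (dims k)) ℂ)
    (hherm : ∀ k i, (lam k i).IsHermitian)
    (htr0 : ∀ k i, (lam k i).trace = 0)
    (horth : ∀ k i j, (lam k i * lam k j).trace = if i = j then 2 else 0) :
    ∑ i : ∀ k, Fin (dims k ^ 2 - 1),
        ‖(ρ * famKron fun k => lam k (i k)).trace‖ ^ 2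
      ≤ 2 ^ n * ∏ i, ((dims i : ℝ) - 1) / (dims i : ℝ) :=
  fully_separable_correlation_bound_general n dims ρ hsep lam hherm htr0 horth
end

section
/- Let ρ be a (1,1,2)-separable four-partite state on H_1^{d_1} ⊗ H_2^{d_2} ⊗ H_3^{d_3} ⊗ H_4^{d_4} with 2 ≤ d_1 ≤ d_2 ≤ d_3 ≤ d_4, i.e., a convex combination of pure states of the form |φ_1⟩ ⊗ |φ_2⟩ ⊗ |φ_{34}⟩. Then ‖T^{(1234)}‖² ≤ 2⁴ (d_1 − 1)(d_2 − 1)(d_3² − 1)/(d_1 d_2 d_3²). -/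
open Matrix BigOperators

/-- The four-fold Kronecker (tensor) product of square matrices, given entrywise. -/
def kron4 {d1 d2 d3 d4 : ℕ} (M1 : Matrix (Fin d1) (Fin d1) ℂ) (M2 : Matrix (Fin d2) (Fin d2) ℂ)
    (M3 : Matrix (Fin d3) (Fin d3) ℂ) (M4 : Matrix (Fin d4) (Fin d4) ℂ) :
    Matrix (Fin d1 × Fin d2 × Fin d3 × Fin d4) (Fin d1 × Fin d2 × Fin d3 × Fin d4) ℂ :=
  fun a b => M1 a.1 b.1 * M2 a.2.1 b.2.1 * M3 a.2.2.1 b.2.2.1 * M4 a.2.2.2 b.2.2.2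

/-!
For a pure state `P = |φ⟩⟨φ|` the coefficients `tr (P λᵢ)` are Hilbert–Schmidt inner products
`⟪λᵢ, P⟫` with an orthogonal family of squared norm 2, so Bessel's inequality bounds their squared
sum by `2 ‖P - W‖²` for every `W` orthogonal to all `λᵢ`. As the `λᵢ` are traceless, `W = 1/d`
gives `2 (d - 1)/d`. For a pure state on `ℂ^{d₃} ⊗ ℂ^{d₄}` and the products `λᵢ ⊗ μⱼ`, take
`W = (1/d₃) 1 ⊗ ρ₂` with `ρ₂` the reduced state on the second factor: then
`‖P - W‖² = 1 - tr ρ₂² / d₃`, and `tr ρ₂² = tr ρ₁² ≥ (tr ρ₁)² / d₃ = 1/d₃` by Cauchy–Schwarz,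
which gives `4 (d₃² - 1)/d₃²`. On a product state `|φ₁⟩|φ₂⟩|φ₃₄⟩` the correlation tensor is the
tensor product of the three, so its squared norm is the product of the three bounds; a separable
state is a convex combination of such states, and the squared norm is convex.
-/

open Function
open scoped ComplexOrder InnerProductSpace Kronecker

theorem sum_norm_inner_sq_le_mul_norm_sub_sq {𝕜 E ι : Type*} [RCLike 𝕜] [SeminormedAddCommGroup E]
    [InnerProductSpace 𝕜 E] [Fintype ι] [DecidableEq ι] {v : ι → E} {C : ℝ} (hC : 0 < C)
    (hv : ∀ i j, ⟪v i, v j⟫_𝕜 = if i = j then (C : 𝕜) else 0) {w : E}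
    (hw : ∀ i, ⟪v i, w⟫_𝕜 = 0) (x : E) :
    ∑ i, ‖⟪v i, x⟫_𝕜‖ ^ 2 ≤ C * ‖x - w‖ ^ 2 := by
  set u : ι → E := fun i => ((√C)⁻¹ : 𝕜) • v i
  have hsqrt : ((√C : 𝕜)) ^ 2 = C := by rw [← RCLike.ofReal_pow, Real.sq_sqrt hC.le]
  have hu : Orthonormal 𝕜 u := by
    rw [orthonormal_iff_ite]
    intro i j
    simp only [u, inner_smul_left, inner_smul_right, hv, map_inv₀, RCLike.conj_ofReal]
    split_ifs
    · field_simp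
      exact hsqrt.symm
    · simp
  have hcoef : ∀ i, ‖⟪v i, x⟫_𝕜‖ ^ 2 = C * ‖⟪u i, x - w⟫_𝕜‖ ^ 2 := fun i => by
    simp only [u, inner_smul_left, inner_sub_right, hw, mul_zero, sub_zero, norm_mul, map_inv₀,
      RCLike.conj_ofReal, norm_inv, RCLike.norm_ofReal, abs_of_nonneg (Real.sqrt_nonneg C)]
    rw [mul_pow, inv_pow, Real.sq_sqrt hC.le, mul_inv_cancel_left₀ hC.ne']
  calc ∑ i, ‖⟪v i, x⟫_𝕜‖ ^ 2 = C * ∑ i, ‖⟪u i, x - w⟫_𝕜‖ ^ 2 := by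
        simp only [hcoef, Finset.mul_sum]
    _ ≤ C * ‖x - w‖ ^ 2 := by gcongr; exact hu.sum_inner_products_le _

theorem sum_norm_sq_sum_mul_le {κ ι : Type*} [Fintype κ] [Fintype ι] {p : κ → ℝ}
    (hp : ∀ k, 0 ≤ p k) (hp1 : ∑ k, p k = 1) {c : κ → ι → ℂ} {B : ℝ}
    (hc : ∀ k, ∑ i, ‖c k i‖ ^ 2 ≤ B) :
    ∑ i, ‖∑ k, (p k : ℂ) * c k i‖ ^ 2 ≤ B := by
  have hjensen : ∀ i, ‖∑ k, (p k : ℂ) * c k i‖ ^ 2 ≤ ∑ k, p k * ‖c k i‖ ^ 2 := fun i => by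
    simpa [Complex.real_smul] using
      (convexOn_univ_norm.pow (fun _ _ => norm_nonneg _) 2).map_sum_le (t := Finset.univ)
        (p := fun k => c k i) (fun k _ => hp k) hp1 (fun _ _ => Set.mem_univ _)
  calc ∑ i, ‖∑ k, (p k : ℂ) * c k i‖ ^ 2 ≤ ∑ i, ∑ k, p k * ‖c k i‖ ^ 2 :=
        Finset.sum_le_sum fun i _ => hjensen i
    _ = ∑ k, p k * ∑ i, ‖c k i‖ ^ 2 := by
        rw [Finset.sum_comm]
        simp only [Finset.mul_sum]
    _ ≤ ∑ k, p k * B := Finset.sum_le_sum fun k _ => mul_le_mul_of_nonneg_left (hc k) (hp k)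
    _ = B := by rw [← Finset.sum_mul, hp1, one_mul]

theorem sum_norm_mul_sq_le {α β : Type*} [Fintype α] [Fintype β] {f : α → ℂ} {g : β → ℂ}
    {a b : ℝ} (hf : ∑ x, ‖f x‖ ^ 2 ≤ a) (hg : ∑ y, ‖g y‖ ^ 2 ≤ b) :
    ∑ z : α × β, ‖f z.1 * g z.2‖ ^ 2 ≤ a * b := by
  simp only [norm_mul, mul_pow, Fintype.sum_prod_type, ← Finset.mul_sum, ← Finset.sum_mul]
  exact mul_le_mul hf hg (by positivity) ((by positivity : (0 : ℝ) ≤ _).trans hf)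

section PureState

variable {n : Type*} {φ : n → ℂ}

theorem isHermitian_vecMulVec_star_self : (vecMulVec φ (star φ)).IsHermitian := by
  rw [IsHermitian, conjTranspose_vecMulVec, star_star]

variable [Fintype n]

theorem star_dotProduct_self_eq_one (hφ : ∑ y, ‖φ y‖ ^ 2 = 1) : star φ ⬝ᵥ φ = 1 := by
  simp only [dotProduct, Pi.star_apply, RCLike.star_def, Complex.conj_mul']
  exact_mod_cast hφ

theorem vecMulVec_star_self_mul_self (hφ : star φ ⬝ᵥ φ = 1) :
    vecMulVec φ (star φ) * vecMulVec φ (star φ) = vecMulVec φ (star φ) := by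
  rw [vecMulVec_mul_vecMulVec, hφ, one_smul]

theorem trace_vecMulVec_star_self (hφ : star φ ⬝ᵥ φ = 1) : (vecMulVec φ (star φ)).trace = 1 := by
  rw [trace_vecMulVec, dotProduct_comm, hφ]

end PureState

section Kronecker

variable {R l m : Type*} [CommSemiring R]

theorem Matrix.IsHermitian.kronecker_s13 [StarRing R] {A : Matrix l l R} {B : Matrix m m R}
    (hA : A.IsHermitian) (hB : B.IsHermitian) : (A ⊗ₖ B).IsHermitian := by
  rw [IsHermitian, conjTranspose_kronecker, hA.eq, hB.eq]

variable [Fintype l] [Fintype m]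

theorem trace_kronecker_mul_kronecker (A C : Matrix l l R) (B D : Matrix m m R) :
    (A ⊗ₖ B * (C ⊗ₖ D)).trace = (A * C).trace * (B * D).trace := by
  rw [← mul_kronecker_mul, trace_kronecker]

theorem trace_kronecker_mul_kronecker_of_orthogonal {ι κ : Type*} [DecidableEq ι] [DecidableEq κ]
    {lam : ι → Matrix l l R} {mu : κ → Matrix m m R} {a b : R}
    (horth_lam : ∀ i i', (lam i * lam i').trace = if i = i' then a else 0)
    (horth_mu : ∀ j j', (mu j * mu j').trace = if j = j' then b else 0) (ij kl : ι × κ) :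
    (lam ij.1 ⊗ₖ mu ij.2 * (lam kl.1 ⊗ₖ mu kl.2)).trace = if ij = kl then a * b else 0 := by
  rw [trace_kronecker_mul_kronecker, horth_lam, horth_mu]
  by_cases h₁ : ij.1 = kl.1 <;> by_cases h₂ : ij.2 = kl.2 <;> simp [h₁, h₂, Prod.ext_iff]

end Kronecker

section Bipartite

variable {m n : Type*}

-- The reduced states `Tr₂ |ψ⟩⟨ψ|` and `Tr₁ |ψ⟩⟨ψ|`, written through the coefficient matrix
-- `Ψ a c = ψ (a, c)` of `ψ`.
def reducedFst [Fintype n] (ψ : m × n → ℂ) : Matrix m m ℂ := of (curry ψ) * (of (curry ψ))ᴴ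

def reducedSnd [Fintype m] (ψ : m × n → ℂ) : Matrix n n ℂ := ((of (curry ψ))ᴴ * of (curry ψ))ᵀ

theorem isHermitian_reducedFst [Fintype n] (ψ : m × n → ℂ) : (reducedFst ψ).IsHermitian :=
  isHermitian_mul_conjTranspose_self _

theorem isHermitian_reducedSnd [Fintype m] (ψ : m × n → ℂ) : (reducedSnd ψ).IsHermitian :=
  (isHermitian_conjTranspose_mul_self _).transpose

variable [Fintype m] [Fintype n]

theorem trace_reducedFst (ψ : m × n → ℂ) : (reducedFst ψ).trace = star ψ ⬝ᵥ ψ := by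
  simp only [reducedFst, trace, diag, mul_apply, conjTranspose_apply, of_apply, curry,
    dotProduct, Pi.star_apply, Fintype.sum_prod_type, mul_comm]

theorem trace_reducedFst_mul_self_eq (ψ : m × n → ℂ) :
    (reducedFst ψ * reducedFst ψ).trace = (reducedSnd ψ * reducedSnd ψ).trace := by
  rw [reducedSnd, ← transpose_mul, trace_transpose, reducedFst, Matrix.mul_assoc, trace_mul_comm]
  simp only [Matrix.mul_assoc]

theorem trace_vecMulVec_mul_one_kronecker [DecidableEq m] (ψ : m × n → ℂ) (B : Matrix n n ℂ) :
    (vecMulVec ψ (star ψ) * (1 ⊗ₖ B)).trace = (reducedSnd ψ * B).trace := by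
  simp only [reducedSnd, trace, diag, mul_apply, transpose_apply, conjTranspose_apply, of_apply,
    curry, vecMulVec_apply, kroneckerMap_apply, one_apply, Pi.star_apply, Fintype.sum_prod_type,
    ite_mul, one_mul, zero_mul, mul_ite, mul_zero, Finset.sum_ite_irrel, Finset.sum_const_zero,
    Finset.sum_ite_eq', Finset.mem_univ, if_true, Finset.sum_mul]
  rw [Finset.sum_comm]
  refine Finset.sum_congr rfl fun c _ => ?_
  rw [Finset.sum_comm]
  exact Finset.sum_congr rfl fun e _ => Finset.sum_congr rfl fun a _ => by ring

end Bipartite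

namespace HilbertSchmidt

variable {m n : Type*} [Fintype m] [DecidableEq m] [Fintype n] [DecidableEq n]

-- The Hilbert–Schmidt structure: Mathlib's inner product `⟪A, B⟫ = tr (B * M * Aᴴ)` induced by
-- the positive matrix `M = 1`.
noncomputable abbrev seminormedAddCommGroup : SeminormedAddCommGroup (Matrix n n ℂ) :=
  toMatrixSeminormedAddCommGroup 1 PosSemidef.one

attribute [local instance] seminormedAddCommGroup

noncomputable abbrev innerProductSpace : InnerProductSpace ℂ (Matrix n n ℂ) :=
  toMatrixInnerProductSpace 1 PosSemidef.one

attribute [local instance] innerProductSpace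

theorem inner_eq_trace (A B : Matrix n n ℂ) : ⟪A, B⟫_ℂ = (B * Aᴴ).trace := by
  simp [inner]

theorem norm_sq_eq_trace (A : Matrix n n ℂ) : ((‖A‖ ^ 2 : ℝ) : ℂ) = (A * Aᴴ).trace := by
  rw [← inner_eq_trace, inner_self_eq_norm_sq_to_K]
  push_cast
  rfl

theorem norm_one_sq : ‖(1 : Matrix n n ℂ)‖ ^ 2 = Fintype.card n := by
  have h := norm_sq_eq_trace (1 : Matrix n n ℂ)
  rw [conjTranspose_one, mul_one, trace_one] at h
  exact_mod_cast h

theorem norm_trace_sq_le (A : Matrix n n ℂ) : ‖A.trace‖ ^ 2 ≤ Fintype.card n * ‖A‖ ^ 2 := by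
  have h := norm_inner_le_norm (𝕜 := ℂ) (1 : Matrix n n ℂ) A
  rw [inner_eq_trace, conjTranspose_one, mul_one] at h
  calc ‖A.trace‖ ^ 2 ≤ (‖(1 : Matrix n n ℂ)‖ * ‖A‖) ^ 2 := by gcongr
    _ = Fintype.card n * ‖A‖ ^ 2 := by rw [mul_pow, norm_one_sq]

theorem norm_kronecker (A : Matrix m m ℂ) (B : Matrix n n ℂ) : ‖A ⊗ₖ B‖ = ‖A‖ * ‖B‖ := by
  have h : ((‖A ⊗ₖ B‖ ^ 2 : ℝ) : ℂ) = ((‖A‖ * ‖B‖) ^ 2 : ℝ) := by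
    rw [norm_sq_eq_trace, conjTranspose_kronecker, ← mul_kronecker_mul, trace_kronecker,
      mul_pow, Complex.ofReal_mul, norm_sq_eq_trace, norm_sq_eq_trace]
  exact (sq_eq_sq₀ (norm_nonneg _) (by positivity)).1 (by exact_mod_cast h)

theorem sum_norm_trace_mul_sq_le {ι : Type*} [Fintype ι] [DecidableEq ι]
    {lam : ι → Matrix n n ℂ} (hherm : ∀ i, (lam i).IsHermitian) {C : ℝ} (hC : 0 < C)
    (horth : ∀ i j, (lam i * lam j).trace = if i = j then (C : ℂ) else 0)
    {w : Matrix n n ℂ} (hw : ∀ i, (w * lam i).trace = 0) (ρ : Matrix n n ℂ) :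
    ∑ i, ‖(ρ * lam i).trace‖ ^ 2 ≤ C * ‖ρ - w‖ ^ 2 := by
  have hinner : ∀ i A, ⟪lam i, A⟫_ℂ = (A * lam i).trace := fun i A => by
    rw [inner_eq_trace, (hherm i).eq]
  have hv : ∀ i j, ⟪lam i, lam j⟫_ℂ = if i = j then (C : ℂ) else 0 := fun i j => by
    rw [hinner, trace_mul_comm, horth]
  have hw' : ∀ i, ⟪lam i, w⟫_ℂ = 0 := fun i => by rw [hinner, hw]
  simpa only [hinner] using sum_norm_inner_sq_le_mul_norm_sub_sq hC hv hw' ρ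

theorem norm_sq_vecMulVec_star_self {φ : n → ℂ} (hφ : star φ ⬝ᵥ φ = 1) :
    ‖vecMulVec φ (star φ)‖ ^ 2 = 1 := by
  have h := norm_sq_eq_trace (vecMulVec φ (star φ))
  rw [isHermitian_vecMulVec_star_self.eq, vecMulVec_star_self_mul_self hφ,
    trace_vecMulVec_star_self hφ] at h
  exact_mod_cast h

theorem one_le_card_mul_norm_sq {A : Matrix n n ℂ} (hA : A.trace = 1) :
    1 ≤ Fintype.card n * ‖A‖ ^ 2 := by
  simpa [hA] using norm_trace_sq_le A

theorem norm_vecMulVec_sub_smul_one_sq {φ : n → ℂ} (hφ : star φ ⬝ᵥ φ = 1) :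
    ‖vecMulVec φ (star φ) - (((Fintype.card n : ℝ)⁻¹ : ℝ) : ℂ) • 1‖ ^ 2
      = ((Fintype.card n : ℝ) - 1) / Fintype.card n := by
  have hd : 1 ≤ (Fintype.card n : ℝ) := by
    simpa [norm_sq_vecMulVec_star_self hφ] using
      one_le_card_mul_norm_sq (trace_vecMulVec_star_self hφ)
  rw [@norm_sub_sq ℂ, norm_sq_vecMulVec_star_self hφ, inner_eq_trace, norm_smul, mul_pow,
    norm_one_sq, smul_mul, one_mul, isHermitian_vecMulVec_star_self.eq, trace_smul,
    trace_vecMulVec_star_self hφ]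
  simp only [smul_eq_mul, mul_one, RCLike.re_to_complex, Complex.ofReal_re, Complex.norm_real,
    Real.norm_eq_abs, sq_abs]
  field_simp
  ring

theorem sum_norm_trace_vecMulVec_mul_sq_le {ι : Type*} [Fintype ι] [DecidableEq ι]
    {lam : ι → Matrix n n ℂ} (hherm : ∀ i, (lam i).IsHermitian) (htr : ∀ i, (lam i).trace = 0)
    (horth : ∀ i j, (lam i * lam j).trace = if i = j then 2 else 0)
    {φ : n → ℂ} (hφ : ∑ y, ‖φ y‖ ^ 2 = 1) :
    ∑ i, ‖(vecMulVec φ (star φ) * lam i).trace‖ ^ 2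
      ≤ 2 * ((Fintype.card n : ℝ) - 1) / Fintype.card n := by
  set w : Matrix n n ℂ := (((Fintype.card n : ℝ)⁻¹ : ℝ) : ℂ) • 1
  have hw : ∀ i, (w * lam i).trace = 0 := fun i => by
    rw [smul_mul, one_mul, trace_smul, htr, smul_zero]
  calc ∑ i, ‖(vecMulVec φ (star φ) * lam i).trace‖ ^ 2
      ≤ 2 * ‖vecMulVec φ (star φ) - w‖ ^ 2 :=
        sum_norm_trace_mul_sq_le hherm two_pos (by simpa using horth) hw _
    _ = 2 * ((Fintype.card n : ℝ) - 1) / Fintype.card n := by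
        rw [norm_vecMulVec_sub_smul_one_sq (star_dotProduct_self_eq_one hφ), mul_div_assoc]

theorem norm_reducedFst_eq_norm_reducedSnd (ψ : m × n → ℂ) :
    ‖reducedFst ψ‖ = ‖reducedSnd ψ‖ := by
  have h : ((‖reducedFst ψ‖ ^ 2 : ℝ) : ℂ) = ((‖reducedSnd ψ‖ ^ 2 : ℝ) : ℂ) := by
    rw [norm_sq_eq_trace, norm_sq_eq_trace, (isHermitian_reducedFst ψ).eq,
      (isHermitian_reducedSnd ψ).eq, trace_reducedFst_mul_self_eq]
  exact (sq_eq_sq₀ (norm_nonneg _) (norm_nonneg _)).1 (by exact_mod_cast h)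

theorem one_le_card_mul_norm_reducedSnd_sq {ψ : m × n → ℂ} (hψ : star ψ ⬝ᵥ ψ = 1) :
    1 ≤ Fintype.card m * ‖reducedSnd ψ‖ ^ 2 := by
  rw [← norm_reducedFst_eq_norm_reducedSnd]
  exact one_le_card_mul_norm_sq (by rw [trace_reducedFst, hψ])

theorem norm_vecMulVec_sub_smul_one_kronecker_reducedSnd_sq {ψ : m × n → ℂ}
    (hψ : star ψ ⬝ᵥ ψ = 1) :
    ‖vecMulVec ψ (star ψ) - (((Fintype.card m : ℝ)⁻¹ : ℝ) : ℂ) • (1 ⊗ₖ reducedSnd ψ)‖ ^ 2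
      = 1 - ‖reducedSnd ψ‖ ^ 2 / Fintype.card m := by
  have hd : (0 : ℝ) < Fintype.card m :=
    pos_of_mul_pos_left (one_pos.trans_le (one_le_card_mul_norm_reducedSnd_sq hψ)) (by positivity)
  have htr : (reducedSnd ψ * reducedSnd ψ).trace = ((‖reducedSnd ψ‖ ^ 2 : ℝ) : ℂ) := by
    rw [norm_sq_eq_trace, (isHermitian_reducedSnd ψ).eq]
  rw [@norm_sub_sq ℂ, norm_sq_vecMulVec_star_self hψ, inner_eq_trace, norm_smul, mul_pow,
    norm_kronecker, mul_pow, norm_one_sq, isHermitian_vecMulVec_star_self.eq, smul_mul,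
    trace_smul, trace_mul_comm, trace_vecMulVec_mul_one_kronecker, htr]
  simp only [smul_eq_mul, RCLike.re_to_complex, ← Complex.ofReal_mul, Complex.ofReal_re,
    Complex.norm_real, Real.norm_eq_abs, sq_abs]
  field_simp
  ring

theorem sum_norm_trace_vecMulVec_mul_kronecker_sq_le {ι κ : Type*} [Fintype ι]
    [DecidableEq ι] [Fintype κ] [DecidableEq κ] {lam : ι → Matrix m m ℂ} {mu : κ → Matrix n n ℂ}
    (hherm_lam : ∀ i, (lam i).IsHermitian) (hherm_mu : ∀ j, (mu j).IsHermitian)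
    (htr : ∀ i, (lam i).trace = 0)
    (horth_lam : ∀ i i', (lam i * lam i').trace = if i = i' then 2 else 0)
    (horth_mu : ∀ j j', (mu j * mu j').trace = if j = j' then 2 else 0)
    {ψ : m × n → ℂ} (hψ : ∑ y, ‖ψ y‖ ^ 2 = 1) :
    ∑ ij : ι × κ, ‖(vecMulVec ψ (star ψ) * (lam ij.1 ⊗ₖ mu ij.2)).trace‖ ^ 2
      ≤ 4 * ((Fintype.card m : ℝ) ^ 2 - 1) / (Fintype.card m : ℝ) ^ 2 := by
  have hψ' := star_dotProduct_self_eq_one hψ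
  have hq := one_le_card_mul_norm_reducedSnd_sq hψ'
  have hd : (0 : ℝ) < Fintype.card m := pos_of_mul_pos_left (one_pos.trans_le hq) (by positivity)
  set w : Matrix (m × n) (m × n) ℂ := (((Fintype.card m : ℝ)⁻¹ : ℝ) : ℂ) • (1 ⊗ₖ reducedSnd ψ)
  have hw : ∀ ij : ι × κ, (w * (lam ij.1 ⊗ₖ mu ij.2)).trace = 0 := fun ij => by
    rw [smul_mul, trace_smul, trace_kronecker_mul_kronecker, one_mul, htr, zero_mul, smul_zero]
  have horth : ∀ ij kl : ι × κ, (lam ij.1 ⊗ₖ mu ij.2 * (lam kl.1 ⊗ₖ mu kl.2)).trace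
      = if ij = kl then ((4 : ℝ) : ℂ) else 0 := fun ij kl => by
    rw [trace_kronecker_mul_kronecker_of_orthogonal horth_lam horth_mu]
    norm_num
  have hB := sum_norm_trace_mul_sq_le (C := 4)
    (fun ij : ι × κ => (hherm_lam ij.1).kronecker_s13 (hherm_mu ij.2)) four_pos horth hw
    (vecMulVec ψ (star ψ))
  calc ∑ ij : ι × κ, ‖(vecMulVec ψ (star ψ) * (lam ij.1 ⊗ₖ mu ij.2)).trace‖ ^ 2
      ≤ 4 * (1 - ‖reducedSnd ψ‖ ^ 2 / Fintype.card m) := by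
        rwa [norm_vecMulVec_sub_smul_one_kronecker_reducedSnd_sq hψ'] at hB
    _ ≤ 4 * (1 - 1 / (Fintype.card m : ℝ) / Fintype.card m) := by
        gcongr
        exact (div_le_iff₀' hd).2 hq
    _ = 4 * ((Fintype.card m : ℝ) ^ 2 - 1) / (Fintype.card m : ℝ) ^ 2 := by
        field_simp

end HilbertSchmidt

theorem kron4_eq_kronecker {d1 d2 d3 d4 : ℕ} (M1 : Matrix (Fin d1) (Fin d1) ℂ)
    (M2 : Matrix (Fin d2) (Fin d2) ℂ) (M3 : Matrix (Fin d3) (Fin d3) ℂ)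
    (M4 : Matrix (Fin d4) (Fin d4) ℂ) : kron4 M1 M2 M3 M4 = M1 ⊗ₖ (M2 ⊗ₖ (M3 ⊗ₖ M4)) := by
  ext a b
  simp only [kron4, kroneckerMap_apply, mul_assoc]

theorem vecMulVec_star_eq_kronecker {α β γ : Type*} (u : α → ℂ) (v : β → ℂ) (w : γ → ℂ) :
    vecMulVec (fun x : α × β × γ => u x.1 * v x.2.1 * w x.2.2)
        (star fun x : α × β × γ => u x.1 * v x.2.1 * w x.2.2)
      = vecMulVec u (star u) ⊗ₖ (vecMulVec v (star v) ⊗ₖ vecMulVec w (star w)) := by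
  ext x y
  simp only [vecMulVec_apply, kroneckerMap_apply, Pi.star_apply, star_mul']
  ring

theorem trace_vecMulVec_mul_kron4 {d1 d2 d3 d4 : ℕ} (u : Fin d1 → ℂ) (v : Fin d2 → ℂ)
    (w : Fin d3 × Fin d4 → ℂ) (M1 : Matrix (Fin d1) (Fin d1) ℂ) (M2 : Matrix (Fin d2) (Fin d2) ℂ)
    (M3 : Matrix (Fin d3) (Fin d3) ℂ) (M4 : Matrix (Fin d4) (Fin d4) ℂ) :
    (vecMulVec (fun x : Fin d1 × Fin d2 × Fin d3 × Fin d4 => u x.1 * v x.2.1 * w x.2.2)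
        (star fun x : Fin d1 × Fin d2 × Fin d3 × Fin d4 => u x.1 * v x.2.1 * w x.2.2) *
        kron4 M1 M2 M3 M4).trace
      = (vecMulVec u (star u) * M1).trace *
          ((vecMulVec v (star v) * M2).trace * (vecMulVec w (star w) * (M3 ⊗ₖ M4)).trace) := by
  rw [vecMulVec_star_eq_kronecker, kron4_eq_kronecker, trace_kronecker_mul_kronecker,
    trace_kronecker_mul_kronecker]

theorem sep112_correlation_bound_general (d1 d2 d3 d4 : ℕ)
    (ρ : Matrix (Fin d1 × Fin d2 × Fin d3 × Fin d4) (Fin d1 × Fin d2 × Fin d3 × Fin d4) ℂ)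
    (hsep : ∃ (N : ℕ) (p : Fin N → ℝ) (φ1 : Fin N → Fin d1 → ℂ) (φ2 : Fin N → Fin d2 → ℂ)
        (φ34 : Fin N → Fin d3 × Fin d4 → ℂ),
        (∀ k, 0 < p k) ∧ (∑ k, p k = 1) ∧
        (∀ k, ∑ y, ‖φ1 k y‖ ^ 2 = 1) ∧ (∀ k, ∑ y, ‖φ2 k y‖ ^ 2 = 1) ∧
        (∀ k, ∑ y, ‖φ34 k y‖ ^ 2 = 1) ∧
        ρ = ∑ k, (p k : ℂ) •
          vecMulVec (fun x => φ1 k x.1 * φ2 k x.2.1 * φ34 k (x.2.2.1, x.2.2.2))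
            (star fun x => φ1 k x.1 * φ2 k x.2.1 * φ34 k (x.2.2.1, x.2.2.2)))
    (lam1 : Fin (d1 ^ 2 - 1) → Matrix (Fin d1) (Fin d1) ℂ)
    (lam2 : Fin (d2 ^ 2 - 1) → Matrix (Fin d2) (Fin d2) ℂ)
    (lam3 : Fin (d3 ^ 2 - 1) → Matrix (Fin d3) (Fin d3) ℂ)
    (lam4 : Fin (d4 ^ 2 - 1) → Matrix (Fin d4) (Fin d4) ℂ)
    (hherm1 : ∀ i, (lam1 i).IsHermitian) (hherm2 : ∀ i, (lam2 i).IsHermitian)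
    (hherm3 : ∀ i, (lam3 i).IsHermitian) (hherm4 : ∀ i, (lam4 i).IsHermitian)
    (htr01 : ∀ i, (lam1 i).trace = 0) (htr02 : ∀ i, (lam2 i).trace = 0)
    (htr03 : ∀ i, (lam3 i).trace = 0)
    (horth1 : ∀ i j, (lam1 i * lam1 j).trace = if i = j then 2 else 0)
    (horth2 : ∀ i j, (lam2 i * lam2 j).trace = if i = j then 2 else 0)
    (horth3 : ∀ i j, (lam3 i * lam3 j).trace = if i = j then 2 else 0)
    (horth4 : ∀ i j, (lam4 i * lam4 j).trace = if i = j then 2 else 0) :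
    ∑ i : Fin (d1 ^ 2 - 1) × Fin (d2 ^ 2 - 1) × Fin (d3 ^ 2 - 1) × Fin (d4 ^ 2 - 1),
        ‖(ρ * kron4 (lam1 i.1) (lam2 i.2.1) (lam3 i.2.2.1) (lam4 i.2.2.2)).trace‖ ^ 2
      ≤ 2 ^ 4 * ((d1 : ℝ) - 1) * ((d2 : ℝ) - 1) * ((d3 : ℝ) ^ 2 - 1)
          / ((d1 : ℝ) * (d2 : ℝ) * (d3 : ℝ) ^ 2) := by
  obtain ⟨N, p, φ1, φ2, φ34, hp, hp1, hφ1, hφ2, hφ34, rfl⟩ := hsep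
  have hpure : ∀ k, ∑ i : Fin (d1 ^ 2 - 1) × Fin (d2 ^ 2 - 1) × Fin (d3 ^ 2 - 1) × Fin (d4 ^ 2 - 1),
      ‖(vecMulVec (φ1 k) (star (φ1 k)) * lam1 i.1).trace *
        ((vecMulVec (φ2 k) (star (φ2 k)) * lam2 i.2.1).trace *
          (vecMulVec (φ34 k) (star (φ34 k)) * (lam3 i.2.2.1 ⊗ₖ lam4 i.2.2.2)).trace)‖ ^ 2
      ≤ 2 * ((d1 : ℝ) - 1) / d1 *
          (2 * ((d2 : ℝ) - 1) / d2 * (4 * ((d3 : ℝ) ^ 2 - 1) / (d3 : ℝ) ^ 2)) := fun k => by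
    simpa only [Fintype.card_fin] using
      sum_norm_mul_sq_le
        (HilbertSchmidt.sum_norm_trace_vecMulVec_mul_sq_le hherm1 htr01 horth1 (hφ1 k))
        (sum_norm_mul_sq_le
          (HilbertSchmidt.sum_norm_trace_vecMulVec_mul_sq_le hherm2 htr02 horth2 (hφ2 k))
          (HilbertSchmidt.sum_norm_trace_vecMulVec_mul_kronecker_sq_le hherm3 hherm4 htr03 horth3
            horth4 (hφ34 k)))
  simp only [Finset.sum_mul, trace_sum, smul_mul, trace_smul, smul_eq_mul, Prod.mk.eta,
    trace_vecMulVec_mul_kron4]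
  exact (sum_norm_sq_sum_mul_le (fun k => (hp k).le) hp1 hpure).trans_eq (by ring)

/-- For a (1,1,2)-separable four-partite state (convex combination of |φ₁⟩⊗|φ₂⟩⊗|φ₃₄⟩),
‖T^{(1234)}‖² ≤ 2⁴(d₁−1)(d₂−1)(d₃²−1)/(d₁d₂d₃²). -/
theorem sep112_correlation_bound (d1 d2 d3 d4 : ℕ)
    (h1 : 2 ≤ d1) (h12 : d1 ≤ d2) (h23 : d2 ≤ d3) (h34 : d3 ≤ d4)
    (ρ : Matrix (Fin d1 × Fin d2 × Fin d3 × Fin d4) (Fin d1 × Fin d2 × Fin d3 × Fin d4) ℂ)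
    (hsep : ∃ (N : ℕ) (p : Fin N → ℝ) (φ1 : Fin N → Fin d1 → ℂ) (φ2 : Fin N → Fin d2 → ℂ)
        (φ34 : Fin N → Fin d3 × Fin d4 → ℂ),
        (∀ k, 0 < p k) ∧ (∑ k, p k = 1) ∧
        (∀ k, ∑ y, ‖φ1 k y‖ ^ 2 = 1) ∧ (∀ k, ∑ y, ‖φ2 k y‖ ^ 2 = 1) ∧
        (∀ k, ∑ y, ‖φ34 k y‖ ^ 2 = 1) ∧
        ρ = ∑ k, (p k : ℂ) •
          vecMulVec (fun x => φ1 k x.1 * φ2 k x.2.1 * φ34 k (x.2.2.1, x.2.2.2))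
            (star fun x => φ1 k x.1 * φ2 k x.2.1 * φ34 k (x.2.2.1, x.2.2.2)))
    (lam1 : Fin (d1 ^ 2 - 1) → Matrix (Fin d1) (Fin d1) ℂ)
    (lam2 : Fin (d2 ^ 2 - 1) → Matrix (Fin d2) (Fin d2) ℂ)
    (lam3 : Fin (d3 ^ 2 - 1) → Matrix (Fin d3) (Fin d3) ℂ)
    (lam4 : Fin (d4 ^ 2 - 1) → Matrix (Fin d4) (Fin d4) ℂ)
    (hherm1 : ∀ i, (lam1 i).IsHermitian) (hherm2 : ∀ i, (lam2 i).IsHermitian)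
    (hherm3 : ∀ i, (lam3 i).IsHermitian) (hherm4 : ∀ i, (lam4 i).IsHermitian)
    (htr01 : ∀ i, (lam1 i).trace = 0) (htr02 : ∀ i, (lam2 i).trace = 0)
    (htr03 : ∀ i, (lam3 i).trace = 0) (htr04 : ∀ i, (lam4 i).trace = 0)
    (horth1 : ∀ i j, (lam1 i * lam1 j).trace = if i = j then 2 else 0)
    (horth2 : ∀ i j, (lam2 i * lam2 j).trace = if i = j then 2 else 0)
    (horth3 : ∀ i j, (lam3 i * lam3 j).trace = if i = j then 2 else 0)
    (horth4 : ∀ i j, (lam4 i * lam4 j).trace = if i = j then 2 else 0) :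
    ∑ i : Fin (d1 ^ 2 - 1) × Fin (d2 ^ 2 - 1) × Fin (d3 ^ 2 - 1) × Fin (d4 ^ 2 - 1),
        ‖(ρ * kron4 (lam1 i.1) (lam2 i.2.1) (lam3 i.2.2.1) (lam4 i.2.2.2)).trace‖ ^ 2
      ≤ 2 ^ 4 * ((d1 : ℝ) - 1) * ((d2 : ℝ) - 1) * ((d3 : ℝ) ^ 2 - 1)
          / ((d1 : ℝ) * (d2 : ℝ) * (d3 : ℝ) ^ 2) :=
  sep112_correlation_bound_general d1 d2 d3 d4 ρ hsep lam1 lam2 lam3 lam4 hherm1 hherm2 hherm3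
    hherm4 htr01 htr02 htr03 horth1 horth2 horth3 horth4
end
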